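/- arXiv:1505.08083 — 2 statements merged into one kernel-verified Lean document; each statement's English description precedes it below -/
import Mathlib

section
/- Let n ≥ 2. There is no state h on the Brown algebra U_n^nc such that h ⋆_T φ = h for every state φ on U_n^nc. In particular, there exists no tensor Haar state on U⟨n⟩, i.e. no state h with φ ⋆_T h = h = h ⋆_T φ for all states φ. -/
noncomputable section

/-- A state on a unital `⋆`-algebra over `ℂ`. -/
def IsState {A : Type} [Ring A] [Algebra ℂ A] [StarRing A]
    (φ : A →ₗ[ℂ] ℂ) : Prop :=
  φ 1 = 1 ∧ ∀ a : A, 0 ≤ (φ (star a * a)).re ∧ (φ (star a * a)).im = 0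

/-- A tracial state. -/
def IsTracialState {A : Type} [Ring A] [Algebra ℂ A] [StarRing A]
    (φ : A →ₗ[ℂ] ℂ) : Prop :=
  IsState φ ∧ ∀ a b : A, φ (a * b) = φ (b * a)

/-- The Brown algebra `U_n^nc`: a unital `⋆`-algebra generated by `n²` elements
`u i j` subject to the unitarity relations, together with its universal property. -/
structure BrownAlg (n : ℕ) where
  carrier : Type
  [ring : Ring carrier]
  [algebra : Algebra ℂ carrier]
  [starRing : StarRing carrier]
  [starModule : StarModule ℂ carrier]
  u : Fin n → Fin n → carrier
  rel_left : ∀ i j, (∑ k, star (u k i) * u k j) = if i = j then 1 else 0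
  rel_right : ∀ i j, (∑ k, u i k * star (u j k)) = if i = j then 1 else 0
  universal : ∀ (C : Type) [Ring C] [Algebra ℂ C] [StarRing C] [StarModule ℂ C]
      (v : Fin n → Fin n → C),
      (∀ i j, (∑ k, star (v k i) * v k j) = if i = j then 1 else 0) →
      (∀ i j, (∑ k, v i k * star (v j k)) = if i = j then 1 else 0) →
      ∃! f : carrier →⋆ₐ[ℂ] C, ∀ i j, f (u i j) = v i j

attribute [instance] BrownAlg.ring BrownAlg.algebra BrownAlg.starRing BrownAlg.starModule

/-- The free product (coproduct) of two unital `⋆`-algebras over `ℂ`,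
presented through its universal property. -/
structure FreeProd (A B : Type) [Ring A] [Algebra ℂ A] [StarRing A]
    [Ring B] [Algebra ℂ B] [StarRing B] where
  carrier : Type
  [ring : Ring carrier]
  [algebra : Algebra ℂ carrier]
  [starRing : StarRing carrier]
  [starModule : StarModule ℂ carrier]
  inl : A →⋆ₐ[ℂ] carrier
  inr : B →⋆ₐ[ℂ] carrier
  universal : ∀ (D : Type) [Ring D] [Algebra ℂ D] [StarRing D] [StarModule ℂ D]
      (f : A →⋆ₐ[ℂ] D) (g : B →⋆ₐ[ℂ] D),
      ∃! h : carrier →⋆ₐ[ℂ] D, (∀ a, h (inl a) = f a) ∧ (∀ b, h (inr b) = g b)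

attribute [instance] FreeProd.ring FreeProd.algebra FreeProd.starRing FreeProd.starModule

namespace FreeProd

variable {A B : Type} [Ring A] [Algebra ℂ A] [StarRing A]
    [Ring B] [Algebra ℂ B] [StarRing B]

/-- The canonical embedding of a tagged element into the free product. -/
def embed (F : FreeProd A B) : A ⊕ B → F.carrier :=
  Sum.elim (fun a => F.inl a) (fun b => F.inr b)

/-- `Ψ` is the free product functional of `φ` and `ψ` on the free product `F`:
it is unital, restricts to `φ` and `ψ` on the two legs, and vanishes on alternating
products of centered elements. -/
def IsFreeProdFunctional (F : FreeProd A B) (φ : A →ₗ[ℂ] ℂ) (ψ : B →ₗ[ℂ] ℂ)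
    (Ψ : F.carrier →ₗ[ℂ] ℂ) : Prop :=
  Ψ 1 = 1 ∧ (∀ a, Ψ (F.inl a) = φ a) ∧ (∀ b, Ψ (F.inr b) = ψ b) ∧
  ∀ l : List (A ⊕ B), l ≠ [] →
    l.Chain' (fun x y => x.isLeft ≠ y.isLeft) →
    (∀ x ∈ l, Sum.elim (fun a => φ a = 0) (fun b => ψ b = 0) x) →
    Ψ ((l.map F.embed).prod) = 0

end FreeProd

section ProdFunctionals

variable {A : Type} [Ring A] [Algebra ℂ A] [StarRing A]

/-- `Ψ` is the tensor (tensor-independent) product functional of `φ` and `ψ`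
relative to the counit `δc`. -/
def IsTensorProdFunctional (F : FreeProd A A) (δc : A →⋆ₐ[ℂ] ℂ)
    (φ ψ : A →ₗ[ℂ] ℂ) (Ψ : F.carrier →ₗ[ℂ] ℂ) : Prop :=
  Ψ 1 = 1 ∧
  ∀ l : List (A ⊕ A), l ≠ [] →
    l.Chain' (fun x y => x.isLeft ≠ y.isLeft) →
    (∀ x ∈ l, Sum.elim (fun a => δc a = 0) (fun b => δc b = 0) x) →
    Ψ ((l.map F.embed).prod) =
      φ (l.filterMap Sum.getLeft?).prod * ψ (l.filterMap Sum.getRight?).prod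

/-- `Ψ` is the boolean product functional of `φ` and `ψ` relative to the counit `δc`. -/
def IsBooleanProdFunctional (F : FreeProd A A) (δc : A →⋆ₐ[ℂ] ℂ)
    (φ ψ : A →ₗ[ℂ] ℂ) (Ψ : F.carrier →ₗ[ℂ] ℂ) : Prop :=
  Ψ 1 = 1 ∧
  ∀ l : List (A ⊕ A), l ≠ [] →
    l.Chain' (fun x y => x.isLeft ≠ y.isLeft) →
    (∀ x ∈ l, Sum.elim (fun a => δc a = 0) (fun b => δc b = 0) x) →
    Ψ ((l.map F.embed).prod) = (l.map (Sum.elim (fun a => φ a) (fun b => ψ b))).prod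

/-- `Ψ` is the monotone product functional of `φ` and `ψ` relative to the counit `δc`. -/
def IsMonotoneProdFunctional (F : FreeProd A A) (δc : A →⋆ₐ[ℂ] ℂ)
    (φ ψ : A →ₗ[ℂ] ℂ) (Ψ : F.carrier →ₗ[ℂ] ℂ) : Prop :=
  Ψ 1 = 1 ∧
  ∀ l : List (A ⊕ A), l ≠ [] →
    l.Chain' (fun x y => x.isLeft ≠ y.isLeft) →
    (∀ x ∈ l, Sum.elim (fun a => δc a = 0) (fun b => δc b = 0) x) →
    Ψ ((l.map F.embed).prod) =
      φ (l.filterMap Sum.getLeft?).prod * ((l.filterMap Sum.getRight?).map (fun b => ψ b)).prod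

/-- `Ψ` is the anti-monotone product functional of `φ` and `ψ` relative to the counit `δc`. -/
def IsAntiMonotoneProdFunctional (F : FreeProd A A) (δc : A →⋆ₐ[ℂ] ℂ)
    (φ ψ : A →ₗ[ℂ] ℂ) (Ψ : F.carrier →ₗ[ℂ] ℂ) : Prop :=
  Ψ 1 = 1 ∧
  ∀ l : List (A ⊕ A), l ≠ [] →
    l.Chain' (fun x y => x.isLeft ≠ y.isLeft) →
    (∀ x ∈ l, Sum.elim (fun a => δc a = 0) (fun b => δc b = 0) x) →
    Ψ ((l.map F.embed).prod) =
      ((l.filterMap Sum.getLeft?).map (fun a => φ a)).prod * ψ (l.filterMap Sum.getRight?).prod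

end ProdFunctionals

namespace BrownAlg

variable {n : ℕ}

/-- `Δ` is the coproduct of the unitary dual group `U⟨n⟩`. -/
def IsCoprod (U : BrownAlg n) (F : FreeProd U.carrier U.carrier)
    (Δ : U.carrier →⋆ₐ[ℂ] F.carrier) : Prop :=
  ∀ i j, Δ (U.u i j) = ∑ k, F.inl (U.u i k) * F.inr (U.u k j)

/-- `δc` is the counit of the unitary dual group `U⟨n⟩`. -/
def IsCounit (U : BrownAlg n) (δc : U.carrier →⋆ₐ[ℂ] ℂ) : Prop :=
  ∀ i j, δc (U.u i j) = if i = j then 1 else 0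

/-- `Σ` is the antipode of the unitary dual group `U⟨n⟩`. -/
def IsAntipode (U : BrownAlg n) (Sa : U.carrier →⋆ₐ[ℂ] U.carrier) : Prop :=
  ∀ i j, Sa (U.u i j) = star (U.u j i)

/-- `χ = φ ⋆_F ψ`, the free convolution of the states `φ` and `ψ` on `U⟨n⟩`. -/
def FreeConv (U : BrownAlg n) (F : FreeProd U.carrier U.carrier)
    (Δ : U.carrier →⋆ₐ[ℂ] F.carrier) (φ ψ χ : U.carrier →ₗ[ℂ] ℂ) : Prop :=
  ∃ Ψ : F.carrier →ₗ[ℂ] ℂ, F.IsFreeProdFunctional φ ψ Ψ ∧ ∀ a, Ψ (Δ a) = χ a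

/-- `χ = φ ⋆_T ψ`, the tensor convolution of the states `φ` and `ψ` on `U⟨n⟩`. -/
def TensorConv (U : BrownAlg n) (F : FreeProd U.carrier U.carrier)
    (Δ : U.carrier →⋆ₐ[ℂ] F.carrier) (δc : U.carrier →⋆ₐ[ℂ] ℂ)
    (φ ψ χ : U.carrier →ₗ[ℂ] ℂ) : Prop :=
  ∃ Ψ : F.carrier →ₗ[ℂ] ℂ, IsTensorProdFunctional F δc φ ψ Ψ ∧ ∀ a, Ψ (Δ a) = χ a

/-- `χ = φ ⋆_B ψ`, the boolean convolution. -/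
def BooleanConv (U : BrownAlg n) (F : FreeProd U.carrier U.carrier)
    (Δ : U.carrier →⋆ₐ[ℂ] F.carrier) (δc : U.carrier →⋆ₐ[ℂ] ℂ)
    (φ ψ χ : U.carrier →ₗ[ℂ] ℂ) : Prop :=
  ∃ Ψ : F.carrier →ₗ[ℂ] ℂ, IsBooleanProdFunctional F δc φ ψ Ψ ∧ ∀ a, Ψ (Δ a) = χ a

/-- `χ = φ ⋆_M ψ`, the monotone convolution. -/
def MonotoneConv (U : BrownAlg n) (F : FreeProd U.carrier U.carrier)
    (Δ : U.carrier →⋆ₐ[ℂ] F.carrier) (δc : U.carrier →⋆ₐ[ℂ] ℂ)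
    (φ ψ χ : U.carrier →ₗ[ℂ] ℂ) : Prop :=
  ∃ Ψ : F.carrier →ₗ[ℂ] ℂ, IsMonotoneProdFunctional F δc φ ψ Ψ ∧ ∀ a, Ψ (Δ a) = χ a

/-- `χ = φ ⋆_AM ψ`, the anti-monotone convolution. -/
def AntiMonotoneConv (U : BrownAlg n) (F : FreeProd U.carrier U.carrier)
    (Δ : U.carrier →⋆ₐ[ℂ] F.carrier) (δc : U.carrier →⋆ₐ[ℂ] ℂ)
    (φ ψ χ : U.carrier →ₗ[ℂ] ℂ) : Prop :=
  ∃ Ψ : F.carrier →ₗ[ℂ] ℂ, IsAntiMonotoneProdFunctional F δc φ ψ Ψ ∧ ∀ a, Ψ (Δ a) = χ a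

end BrownAlg

/-! Against a tensor product functional the two legs of the free product behave as if they
commuted, so `h ⋆_T φ = h` gives, for all `w a`,
`h (u w a * (u w a)⋆) = ∑ p q, h (u w p * (u w q)⋆) * φ (u p a * (u q a)⋆)`.
For `a ≠ b`, let `u` act on `ℂⁿ ⊗ ℂ²` by the transposition of the basis vectors `(a, 1)` and
`(b, 0)`; this is a unitary `n × n` matrix over `M₂(ℂ)` whose transpose is not unitary, and the
vector state `φ` at `(0, 0)` has `φ (u p a * (u q a)⋆) = δ_pq (δ_pa + δ_pb)`. Hence
`h (u w b * (u w b)⋆) = 0` for every `b`, contradicting `∑ b, u w b * (u w b)⋆ = 1`. -/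

section TensorProdFunctional

variable {A : Type} [Ring A] [Algebra ℂ A] [StarRing A]

def tensorWordValue (φ ψ : A →ₗ[ℂ] ℂ) (l : List (A ⊕ A)) : ℂ :=
  φ (l.filterMap Sum.getLeft?).prod * ψ (l.filterMap Sum.getRight?).prod

def IsAlternatingCentered (δc : A →⋆ₐ[ℂ] ℂ) (l : List (A ⊕ A)) : Prop :=
  l.IsChain (fun x y => x.isLeft ≠ y.isLeft) ∧
    ∀ x ∈ l, Sum.elim (fun a => δc a = 0) (fun b => δc b = 0) x

def centerLetter (δc : A →⋆ₐ[ℂ] ℂ) : A ⊕ A → A ⊕ A :=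
  Sum.map (fun a => a - δc a • 1) (fun a => a - δc a • 1)

variable {F : FreeProd A A} {δc : A →⋆ₐ[ℂ] ℂ} {φ ψ : A →ₗ[ℂ] ℂ}

lemma FreeProd.embed_eq_embed_centerLetter_add (y : A ⊕ A) :
    F.embed y = F.embed (centerLetter δc y) + Sum.elim δc δc y • 1 := by
  cases y <;> simp [FreeProd.embed, centerLetter]

lemma FreeProd.prod_map_embed_append_cons (t r : List (A ⊕ A)) (y : A ⊕ A) :
    ((t ++ y :: r).map F.embed).prod =
      ((t ++ centerLetter δc y :: r).map F.embed).prod +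
        Sum.elim δc δc y • ((t ++ r).map F.embed).prod := by
  simp only [List.map_append, List.map_cons, List.prod_append, List.prod_cons,
    F.embed_eq_embed_centerLetter_add (δc := δc) y, add_mul, mul_add, smul_mul_assoc, one_mul,
    mul_smul_comm]

lemma isAlternatingCentered_centerLetter_singleton (y : A ⊕ A) :
    IsAlternatingCentered δc [centerLetter δc y] := by
  refine ⟨List.isChain_singleton _, ?_⟩
  cases y <;> simp [centerLetter]

lemma tensorWordValue_append_cons (t r : List (A ⊕ A)) (y : A ⊕ A) :
    tensorWordValue φ ψ (t ++ y :: r) =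
      tensorWordValue φ ψ (t ++ centerLetter δc y :: r) +
        Sum.elim δc δc y * tensorWordValue φ ψ (t ++ r) := by
  cases y <;>
    simp [tensorWordValue, centerLetter, List.filterMap_append, List.filterMap_cons, mul_sub,
      sub_mul] <;> ring

lemma IsAlternatingCentered.cons_of_isLeft_eq {x z : A ⊕ A} {rest : List (A ⊕ A)}
    (hr : IsAlternatingCentered δc (x :: rest)) (hzx : z.isLeft = x.isLeft)
    (hz : Sum.elim (fun a => δc a = 0) (fun b => δc b = 0) z) :
    IsAlternatingCentered δc (z :: rest) := by
  obtain ⟨hchain, hcent⟩ := hr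
  refine ⟨?_, ?_⟩
  · rw [List.isChain_cons] at hchain ⊢
    exact ⟨fun w hw => hzx ▸ hchain.1 w hw, hchain.2⟩
  · rintro w (_ | ⟨_, hw⟩)
    exacts [hz, hcent w (List.mem_cons_of_mem _ hw)]

lemma IsAlternatingCentered.exists_cons {r : List (A ⊕ A)} (hr : IsAlternatingCentered δc r)
    {y : A ⊕ A} (hy : IsAlternatingCentered δc [y]) :
    ∃ r', IsAlternatingCentered δc r' ∧ ((y :: r).map F.embed).prod = (r'.map F.embed).prod ∧
      ((y :: r).filterMap Sum.getLeft?).prod = (r'.filterMap Sum.getLeft?).prod ∧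
      ((y :: r).filterMap Sum.getRight?).prod = (r'.filterMap Sum.getRight?).prod := by
  have hy' := hy.2 y (List.mem_singleton_self _)
  cases r with
  | nil => exact ⟨[y], hy, rfl, rfl, rfl⟩
  | cons x rest =>
    by_cases hside : y.isLeft ≠ x.isLeft
    · refine ⟨y :: x :: rest, ⟨List.isChain_cons_cons.2 ⟨hside, hr.1⟩, ?_⟩, rfl, rfl,
        rfl⟩
      rintro z (_ | ⟨_, hz⟩)
      exacts [hy', hr.2 z hz]
    -- same side: merge `y` into `x`; a product with a centered factor is centered
    have hx := hr.2 x List.mem_cons_self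
    rcases y with a | a <;> rcases x with b | b <;> simp at hside
    · refine ⟨Sum.inl (a * b) :: rest, hr.cons_of_isLeft_eq rfl ?_, ?_, ?_, ?_⟩ <;>
        simp_all [FreeProd.embed, List.filterMap_cons, mul_assoc]
    · refine ⟨Sum.inr (a * b) :: rest, hr.cons_of_isLeft_eq rfl ?_, ?_, ?_, ?_⟩ <;>
        simp_all [FreeProd.embed, List.filterMap_cons, mul_assoc]

variable {Ψ : F.carrier →ₗ[ℂ] ℂ}

theorem IsTensorProdFunctional.apply_prod_map_embed (hΨ : IsTensorProdFunctional F δc φ ψ Ψ)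
    (hφ : φ 1 = 1) (hψ : ψ 1 = 1) (l : List (A ⊕ A)) :
    Ψ (l.map F.embed).prod = tensorWordValue φ ψ l := by
  -- Center the letters from right to left, keeping the processed suffix alternating
  -- and centered.
  suffices key : ∀ t r : List (A ⊕ A), IsAlternatingCentered δc r →
      Ψ ((t.reverse ++ r).map F.embed).prod = tensorWordValue φ ψ (t.reverse ++ r) by
    simpa using key l.reverse [] ⟨List.isChain_nil, by simp⟩
  intro t
  induction t with
  | nil =>
    rintro (_ | ⟨x, r⟩) hr
    · simp [tensorWordValue, hΨ.1, hφ, hψ]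
    · exact hΨ.2 _ (List.cons_ne_nil x r) hr.1 hr.2
  | cons y t ih =>
    intro r hr
    obtain ⟨r', hr', hE, hL, hR⟩ :=
      hr.exists_cons (F := F) (isAlternatingCentered_centerLetter_singleton y)
    have hcentered : Ψ ((t.reverse ++ centerLetter δc y :: r).map F.embed).prod =
        tensorWordValue φ ψ (t.reverse ++ centerLetter δc y :: r) := by
      have := ih r' hr'
      simp only [tensorWordValue, List.map_append, List.prod_append, List.filterMap_append]
        at this ⊢
      rw [hE, hL, hR]
      exact this
    rw [List.reverse_cons, List.append_assoc, List.singleton_append,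
      F.prod_map_embed_append_cons (δc := δc), tensorWordValue_append_cons (δc := δc),
      map_add, map_smul, hcentered, ih r hr, smul_eq_mul]

end TensorProdFunctional

theorem Equiv.Perm.permMatrix_mem_unitary {m R : Type*} [Fintype m] [DecidableEq m]
    [Semiring R] [StarRing R] (σ : Equiv.Perm m) :
    σ.permMatrix R ∈ unitary (Matrix m m R) := by
  rw [Unitary.mem_iff, Matrix.star_eq_conjTranspose, Matrix.conjTranspose_permMatrix]
  constructor <;> rw [← PEquiv.toMatrix_trans, ← Equiv.toPEquiv_trans]
  all_goals simp [← Equiv.Perm.mul_def]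

theorem Matrix.comp_symm_mem_unitary {I J R : Type*} [Fintype I] [DecidableEq I] [Fintype J]
    [DecidableEq J] [Semiring R] [StarRing R] {W : Matrix (I × J) (I × J) R}
    (hW : W ∈ unitary _) :
    (Matrix.comp I I J J R).symm W ∈ unitary (Matrix I I (Matrix J J R)) := by
  have hstar : star ((Matrix.comp I I J J R).symm W) = (Matrix.comp I I J J R).symm (star W) := by
    ext; rfl
  rw [Unitary.mem_iff, hstar, ← Matrix.compRingEquiv_symm_apply,
    ← Matrix.compRingEquiv_symm_apply, ← map_mul, ← map_mul, Unitary.star_mul_self_of_mem hW,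
    Unitary.mul_star_self_of_mem hW, map_one]
  exact ⟨rfl, rfl⟩

open ComplexOrder in
theorem isState_entryLinearMap_comp {A : Type} {m : Type*} [Ring A] [Algebra ℂ A] [StarRing A]
    [Fintype m] [DecidableEq m] (f : A →⋆ₐ[ℂ] Matrix m m ℂ) (i : m) :
    IsState (Matrix.entryLinearMap ℂ ℂ i i ∘ₗ f.toLinearMap) := by
  refine ⟨by simp, fun a => ?_⟩
  have : 0 ≤ (star (f a) * f a) i i :=
    (Matrix.posSemidef_conjTranspose_mul_self (f a)).diag_nonneg
  obtain ⟨hre, him⟩ := Complex.nonneg_iff.1 this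
  simpa [map_mul, map_star] using ⟨hre, him.symm⟩

namespace BrownAlg

variable {n : ℕ}

theorem exists_starAlgHom_of_mem_unitary (U : BrownAlg n) {C : Type} [Ring C] [Algebra ℂ C]
    [StarRing C] [StarModule ℂ C] {V : Matrix (Fin n) (Fin n) C}
    (hV : V ∈ unitary (Matrix (Fin n) (Fin n) C)) :
    ∃ f : U.carrier →⋆ₐ[ℂ] C, ∀ i j, f (U.u i j) = V i j := by
  obtain ⟨f, hf, -⟩ := U.universal C V
    (fun i j => by simpa [Matrix.mul_apply, Matrix.one_apply] using
      Matrix.ext_iff.mpr (Unitary.star_mul_self_of_mem hV) i j)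
    (fun i j => by simpa [Matrix.mul_apply, Matrix.one_apply] using
      Matrix.ext_iff.mpr (Unitary.mul_star_self_of_mem hV) i j)
  exact ⟨f, hf⟩

theorem exists_isState_apply_u_mul_star_u (U : BrownAlg n) {a b : Fin n} (hab : a ≠ b) :
    ∃ φ : U.carrier →ₗ[ℂ] ℂ, IsState φ ∧ ∀ p q, φ (U.u p a * star (U.u q a)) =
      (if p = a ∧ q = a then 1 else 0) + (if p = b ∧ q = b then 1 else 0) := by
  set σ := Equiv.swap ((a, 1) : Fin n × Fin 2) (b, 0)
  have hV := Matrix.comp_symm_mem_unitary (σ.permMatrix_mem_unitary (R := ℂ))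
  obtain ⟨π, hπ⟩ := U.exists_starAlgHom_of_mem_unitary hV
  refine ⟨_, isState_entryLinearMap_comp π 0, fun p q => ?_⟩
  have hσ0 : σ (a, 0) = (a, 0) := Equiv.swap_apply_of_ne_of_ne (by simp) (by simp [hab])
  have hσ1 : σ (a, 1) = (b, 0) := Equiv.swap_apply_left _ _
  change (π (U.u p a * star (U.u q a))) 0 0 = _
  rw [map_mul, map_star, hπ, hπ]
  have hentry : ∀ x z, (Matrix.comp (Fin n) (Fin n) (Fin 2) (Fin 2) ℂ).symm
      (σ.permMatrix ℂ) x a 0 z = if (x, 0) = σ (a, z) then 1 else 0 := by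
    intro x z
    simp [PEquiv.toMatrix_apply, σ, Equiv.swap_apply_eq_iff]
  simp only [Matrix.mul_apply, Fin.sum_univ_two, Matrix.star_apply, hentry, hσ0, hσ1]
  split_ifs <;> simp_all

variable {U : BrownAlg n} {F : FreeProd U.carrier U.carrier}
  {Δ : U.carrier →⋆ₐ[ℂ] F.carrier} {δc : U.carrier →⋆ₐ[ℂ] ℂ}

theorem TensorConv.apply_u_mul_star_u (hΔ : U.IsCoprod F Δ) {φ ψ χ : U.carrier →ₗ[ℂ] ℂ}
    (hχ : U.TensorConv F Δ δc φ ψ χ) (hφ : φ 1 = 1) (hψ : ψ 1 = 1) (i j a b : Fin n) :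
    χ (U.u i a * star (U.u j b)) =
      ∑ p, ∑ q, φ (U.u i p * star (U.u j q)) * ψ (U.u p a * star (U.u q b)) := by
  obtain ⟨Ψ, hΨ, hΨχ⟩ := hχ
  rw [← hΨχ, map_mul, map_star, hΔ, hΔ, star_sum, Finset.sum_mul_sum, map_sum]
  refine Finset.sum_congr rfl fun p _ => ?_
  rw [map_sum]
  refine Finset.sum_congr rfl fun q _ => ?_
  have := hΨ.apply_prod_map_embed hφ hψ
    [.inl (U.u i p), .inr (U.u p a), .inr (star (U.u q b)), .inl (star (U.u j q))]
  simpa [FreeProd.embed, tensorWordValue, List.filterMap_cons, star_mul, map_star, mul_assoc]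
    using this

theorem apply_u_mul_star_u_eq_zero_of_tensorConv_eq (hΔ : U.IsCoprod F Δ)
    {h : U.carrier →ₗ[ℂ] ℂ} (hh : IsState h)
    (hinv : ∀ φ : U.carrier →ₗ[ℂ] ℂ, IsState φ → U.TensorConv F Δ δc h φ h)
    (w : Fin n) {a b : Fin n} (hab : a ≠ b) :
    h (U.u w b * star (U.u w b)) = 0 := by
  obtain ⟨φ, hφ, hφu⟩ := U.exists_isState_apply_u_mul_star_u hab
  have key := (hinv φ hφ).apply_u_mul_star_u hΔ hh.1 hφ.1 w w a a
  simpa [hφu, mul_add, Finset.sum_add_distrib, ite_and] using key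

theorem not_exists_isState_tensorConv_eq (hn : 2 ≤ n) (hΔ : U.IsCoprod F Δ) :
    ¬ ∃ h : U.carrier →ₗ[ℂ] ℂ, IsState h ∧
      ∀ φ : U.carrier →ₗ[ℂ] ℂ, IsState φ → U.TensorConv F Δ δc h φ h := by
  rintro ⟨h, hh, hinv⟩
  have : Nontrivial (Fin n) := Fin.nontrivial_iff_two_le.2 hn
  let w : Fin n := ⟨0, by omega⟩
  have hzero (b : Fin n) : h (U.u w b * star (U.u w b)) = 0 :=
    apply_u_mul_star_u_eq_zero_of_tensorConv_eq hΔ hh hinv w (exists_ne b).choose_spec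
  have hsum : h (∑ b, U.u w b * star (U.u w b)) = 1 := by
    simpa [U.rel_right w w] using hh.1
  simp [map_sum, hzero] at hsum

end BrownAlg

theorem no_tensor_haar_state_general (n : ℕ) (hn : 2 ≤ n) (U : BrownAlg n)
    (F : FreeProd U.carrier U.carrier) (Δ : U.carrier →⋆ₐ[ℂ] F.carrier)
    (hΔ : U.IsCoprod F Δ) (δc : U.carrier →⋆ₐ[ℂ] ℂ) :
    (¬ ∃ h : U.carrier →ₗ[ℂ] ℂ, IsState h ∧
        ∀ φ : U.carrier →ₗ[ℂ] ℂ, IsState φ → U.TensorConv F Δ δc h φ h) ∧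
    (¬ ∃ h : U.carrier →ₗ[ℂ] ℂ, IsState h ∧
        ∀ φ : U.carrier →ₗ[ℂ] ℂ, IsState φ →
          U.TensorConv F Δ δc φ h h ∧ U.TensorConv F Δ δc h φ h) :=
  ⟨BrownAlg.not_exists_isState_tensorConv_eq hn hΔ, fun ⟨h, hh, hinv⟩ =>
    BrownAlg.not_exists_isState_tensorConv_eq hn hΔ ⟨h, hh, fun φ hφ => (hinv φ hφ).2⟩⟩

/-- For `n ≥ 2` there is no state `h` on the Brown algebra with
`h ⋆_T φ = h` for every state `φ`; in particular there is no tensor Haar state on `U⟨n⟩`. -/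
theorem no_tensor_haar_state (n : ℕ) (hn : 2 ≤ n) (U : BrownAlg n)
    (F : FreeProd U.carrier U.carrier) (Δ : U.carrier →⋆ₐ[ℂ] F.carrier)
    (hΔ : U.IsCoprod F Δ) (δc : U.carrier →⋆ₐ[ℂ] ℂ) (hδ : U.IsCounit δc) :
    (¬ ∃ h : U.carrier →ₗ[ℂ] ℂ, IsState h ∧
        ∀ φ : U.carrier →ₗ[ℂ] ℂ, IsState φ → U.TensorConv F Δ δc h φ h) ∧
    (¬ ∃ h : U.carrier →ₗ[ℂ] ℂ, IsState h ∧
        ∀ φ : U.carrier →ₗ[ℂ] ℂ, IsState φ →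
          U.TensorConv F Δ δc φ h h ∧ U.TensorConv F Δ δc h φ h) :=
  no_tensor_haar_state_general n hn U F Δ hΔ δc
end
end

section
/- Let n ≥ 1 and let h be a state on the Brown algebra U_n^nc such that h ⋆_F φ = h for every state φ on U_n^nc (a right Haar state for the free convolution). Then h ∘ Σ = h, and h is also a left Haar state: φ ⋆_F h = h for every state φ. The same conclusion holds if 'state' is replaced by 'tracial state' throughout. -/
/-!
The endomorphism of the free product that swaps the two legs and applies the antipode `Σ`
on each of them intertwines `Δ` with `Δ ∘ Σ`; pulling a free product functional back along
it swaps the roles of the legs, so `(φ ⋆ ψ) ∘ Σ = (ψ ∘ Σ) ⋆ (φ ∘ Σ)`. Since `Σ` is an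
involution, right invariance `h ⋆ (φ ∘ Σ) = h` turns into left invariance
`φ ⋆ (h ∘ Σ) = h ∘ Σ`. Hence `h ⋆ (h ∘ Σ)` is both `h` and `h ∘ Σ`. The free product
functional is unique, because alternating words of centered elements span the free
product, so `h ∘ Σ = h`, and `h` is left invariant.
-/

noncomputable section

namespace FreeProd

section Letters

variable {A B : Type} [Ring A] [Algebra ℂ A] [Ring B] [Algebra ℂ B]
  (φ : A →ₗ[ℂ] ℂ) (ψ : B →ₗ[ℂ] ℂ)

def IsCentered : A ⊕ B → Prop :=
  Sum.elim (fun a => φ a = 0) (fun b => ψ b = 0)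

def IsReducedWord (l : List (A ⊕ B)) : Prop :=
  l.IsChain (fun x y => x.isLeft ≠ y.isLeft) ∧ ∀ x ∈ l, IsCentered φ ψ x

def center : A ⊕ B → A ⊕ B :=
  Sum.map (fun a => a - φ a • 1) (fun b => b - ψ b • 1)

variable {φ ψ}

theorem isLeft_center (x : A ⊕ B) : (center φ ψ x).isLeft = x.isLeft :=
  Sum.isLeft_map _ _ x

theorem isCentered_center (hφ : φ 1 = 1) (hψ : ψ 1 = 1) (x : A ⊕ B) :
    IsCentered φ ψ (center φ ψ x) := by
  cases x <;> simp [center, IsCentered, hφ, hψ]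

end Letters

section Words

variable {A B : Type} [Ring A] [Algebra ℂ A] [StarRing A]
    [Ring B] [Algebra ℂ B] [StarRing B] (F : FreeProd A B)

theorem hom_ext {D : Type} [Ring D] [Algebra ℂ D] [StarRing D] [StarModule ℂ D]
    {f g : F.carrier →⋆ₐ[ℂ] D} (hl : ∀ a, f (F.inl a) = g (F.inl a))
    (hr : ∀ b, f (F.inr b) = g (F.inr b)) : f = g :=
  (F.universal D (g.comp F.inl) (g.comp F.inr)).unique ⟨hl, hr⟩ ⟨fun _ => rfl, fun _ => rfl⟩

theorem star_embed (x : A ⊕ B) : star (F.embed x) = F.embed (x.map star star) := by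
  cases x <;> exact (map_star _ _).symm

theorem starAdjoin_range_embed : StarAlgebra.adjoin ℂ (Set.range F.embed) = ⊤ := by
  set S := StarAlgebra.adjoin ℂ (Set.range F.embed)
  have hl : ∀ a, F.inl a ∈ S := fun a => StarAlgebra.subset_adjoin ℂ _ ⟨Sum.inl a, rfl⟩
  have hr : ∀ b, F.inr b ∈ S := fun b => StarAlgebra.subset_adjoin ℂ _ ⟨Sum.inr b, rfl⟩
  obtain ⟨k, ⟨hk₁, hk₂⟩, -⟩ :=
    F.universal S (F.inl.codRestrict S hl) (F.inr.codRestrict S hr)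
  have hk : S.subtype.comp k = StarAlgHom.id ℂ F.carrier :=
    F.hom_ext (fun a => congrArg Subtype.val (hk₁ a)) (fun b => congrArg Subtype.val (hk₂ b))
  refine eq_top_iff.2 fun x _ => ?_
  have hx : (k x : F.carrier) = x := DFunLike.congr_fun hk x
  exact hx ▸ (k x).2

theorem adjoin_range_embed : Algebra.adjoin ℂ (Set.range F.embed) = ⊤ := by
  have hstar : star (Set.range F.embed) ⊆ Set.range F.embed := by
    rintro x ⟨y, hy⟩
    exact ⟨y.map star star, by rw [← star_embed, hy, star_star]⟩
  rw [← Set.union_eq_left.2 hstar, ← StarAlgebra.adjoin_toSubalgebra,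
    F.starAdjoin_range_embed, StarSubalgebra.top_toSubalgebra]

variable {F} {φ : A →ₗ[ℂ] ℂ} {ψ : B →ₗ[ℂ] ℂ}

variable (F φ ψ) in
def reducedWordSpan : Submodule ℂ F.carrier :=
  Submodule.span ℂ {w | ∃ l, IsReducedWord φ ψ l ∧ (l.map F.embed).prod = w}

theorem prod_mem_reducedWordSpan {l : List (A ⊕ B)} (hl : IsReducedWord φ ψ l) :
    (l.map F.embed).prod ∈ F.reducedWordSpan φ ψ :=
  Submodule.subset_span ⟨l, hl, rfl⟩

theorem embed_eq_center_add (x : A ⊕ B) :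
    F.embed x = F.embed (center φ ψ x) + Sum.elim φ ψ x • 1 := by
  cases x <;> simp [center, embed, map_sub, map_smul]

theorem exists_embed_mul_embed {x y : A ⊕ B} (h : x.isLeft = y.isLeft) :
    ∃ z, F.embed x * F.embed y = F.embed z := by
  rcases x with a | a <;> rcases y with b | b <;> simp at h
  exacts [⟨.inl (a * b), (map_mul F.inl a b).symm⟩, ⟨.inr (a * b), (map_mul F.inr a b).symm⟩]

theorem embed_mul_mem_of_isChain_cons (hφ : φ 1 = 1) (hψ : ψ 1 = 1) {x : A ⊕ B}
    {l : List (A ⊕ B)} (hl : IsReducedWord φ ψ l)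
    (hxl : (x :: l).IsChain (fun x y => x.isLeft ≠ y.isLeft)) :
    F.embed x * (l.map F.embed).prod ∈ F.reducedWordSpan φ ψ := by
  have hword : IsReducedWord φ ψ (center φ ψ x :: l) := by
    refine ⟨List.isChain_cons.2 ⟨?_, hl.1⟩,
      List.forall_mem_cons.2 ⟨isCentered_center hφ hψ x, hl.2⟩⟩
    simpa only [isLeft_center] using (List.isChain_cons.1 hxl).1
  rw [embed_eq_center_add (φ := φ) (ψ := ψ), add_mul, smul_one_mul]
  exact add_mem (prod_mem_reducedWordSpan hword)
    (Submodule.smul_mem _ _ (prod_mem_reducedWordSpan hl))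

theorem embed_mul_mem_reducedWordSpan (hφ : φ 1 = 1) (hψ : ψ 1 = 1) (x : A ⊕ B)
    {l : List (A ⊕ B)} (hl : IsReducedWord φ ψ l) :
    F.embed x * (l.map F.embed).prod ∈ F.reducedWordSpan φ ψ := by
  induction l generalizing x with
  | nil => exact embed_mul_mem_of_isChain_cons hφ hψ hl (List.isChain_singleton x)
  | cons y l ih =>
    by_cases hxy : x.isLeft = y.isLeft
    · obtain ⟨z, hz⟩ := F.exists_embed_mul_embed hxy
      rw [List.map_cons, List.prod_cons, ← mul_assoc, hz]
      exact ih z ⟨hl.1.tail, fun w hw => hl.2 w (List.mem_cons_of_mem y hw)⟩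
    · exact embed_mul_mem_of_isChain_cons hφ hψ hl (List.isChain_cons_cons.2 ⟨hxy, hl.1⟩)

theorem reducedWordSpan_eq_top (hφ : φ 1 = 1) (hψ : ψ 1 = 1) :
    F.reducedWordSpan φ ψ = ⊤ := by
  set W := F.reducedWordSpan φ ψ
  suffices h : ∀ x, ∀ w ∈ W, x * w ∈ W by
    refine eq_top_iff.2 fun x _ => ?_
    simpa using h x 1 (prod_mem_reducedWordSpan (l := []) ⟨List.isChain_nil, by simp⟩)
  intro x
  have hx : x ∈ Algebra.adjoin ℂ (Set.range F.embed) := F.adjoin_range_embed ▸ Algebra.mem_top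
  induction hx using Algebra.adjoin_induction with
  | mem _ hy =>
    obtain ⟨y, rfl⟩ := hy
    intro w hw
    refine (Submodule.span_le (p := W.comap (LinearMap.mulLeft ℂ (F.embed y)))).2 ?_ hw
    rintro _ ⟨l, hl, rfl⟩
    exact embed_mul_mem_reducedWordSpan hφ hψ y hl
  | algebraMap r =>
    intro w hw
    simpa only [Algebra.algebraMap_eq_smul_one, smul_one_mul] using W.smul_mem r hw
  | add x y _ _ hx hy => exact fun w hw => add_mul x y w ▸ add_mem (hx w hw) (hy w hw)
  | mul x y _ _ hx hy => exact fun w hw => (mul_assoc x y w).symm ▸ hx _ (hy w hw)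

theorem IsFreeProdFunctional.unique (hφ : φ 1 = 1) (hψ : ψ 1 = 1)
    {Ψ₁ Ψ₂ : F.carrier →ₗ[ℂ] ℂ} (H₁ : F.IsFreeProdFunctional φ ψ Ψ₁)
    (H₂ : F.IsFreeProdFunctional φ ψ Ψ₂) : Ψ₁ = Ψ₂ := by
  have hwords : Set.EqOn Ψ₁ Ψ₂ {w | ∃ l, IsReducedWord φ ψ l ∧ (l.map F.embed).prod = w} := by
    rintro _ ⟨l, hl, rfl⟩
    rcases eq_or_ne l [] with rfl | hne
    · simp only [List.map_nil, List.prod_nil, H₁.1, H₂.1]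
    · rw [H₁.2.2.2 l hne hl.1 hl.2, H₂.2.2.2 l hne hl.1 hl.2]
  refine LinearMap.ext fun x => LinearMap.eqOn_span' hwords ?_
  change x ∈ F.reducedWordSpan φ ψ
  simp [reducedWordSpan_eq_top hφ hψ]

end Words

section Swap

variable {A : Type} [Ring A] [Algebra ℂ A] [StarRing A] {F : FreeProd A A}

theorem IsFreeProdFunctional.comp_swap {φ ψ : A →ₗ[ℂ] ℂ} {Ψ : F.carrier →ₗ[ℂ] ℂ}
    (hΨ : F.IsFreeProdFunctional φ ψ Ψ) (σ : A →ₗ[ℂ] A) (G : F.carrier →ₐ[ℂ] F.carrier)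
    (hGl : ∀ a, G (F.inl a) = F.inr (σ a)) (hGr : ∀ a, G (F.inr a) = F.inl (σ a)) :
    F.IsFreeProdFunctional (ψ ∘ₗ σ) (φ ∘ₗ σ) (Ψ ∘ₗ G.toLinearMap) := by
  obtain ⟨hΨ₁, hΨl, hΨr, hΨw⟩ := hΨ
  have hG : ∀ x, G (F.embed x) = F.embed (x.map σ σ).swap := by
    rintro (a | a)
    exacts [hGl a, hGr a]
  refine ⟨by simpa using hΨ₁, fun a => by simp [hGl, hΨr], fun a => by simp [hGr, hΨl],
    fun l hl hchain hcent => ?_⟩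
  have hprod :
      G (l.map F.embed).prod = ((l.map fun x => (x.map σ σ).swap).map F.embed).prod := by
    rw [map_list_prod, List.map_map, List.map_map]
    exact congrArg List.prod (List.map_congr_left fun x _ => hG x)
  rw [LinearMap.comp_apply, AlgHom.toLinearMap_apply, hprod]
  refine hΨw _ (by simpa using hl) ?_ ?_
  · refine (List.isChain_map _).2 (hchain.imp fun x y hxy => ?_)
    simpa [← Sum.bnot_isRight] using hxy
  · simp only [List.mem_map]
    rintro _ ⟨(a | a), hx, rfl⟩
    exacts [hcent _ hx, hcent _ hx]

variable (F) in
def swapMap (σ : A →⋆ₐ[ℂ] A) : F.carrier →⋆ₐ[ℂ] F.carrier :=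
  (F.universal F.carrier (F.inr.comp σ) (F.inl.comp σ)).exists.choose

theorem swapMap_inl (σ : A →⋆ₐ[ℂ] A) (a : A) : F.swapMap σ (F.inl a) = F.inr (σ a) :=
  (F.universal F.carrier (F.inr.comp σ) (F.inl.comp σ)).exists.choose_spec.1 a

theorem swapMap_inr (σ : A →⋆ₐ[ℂ] A) (a : A) : F.swapMap σ (F.inr a) = F.inl (σ a) :=
  (F.universal F.carrier (F.inr.comp σ) (F.inl.comp σ)).exists.choose_spec.2 a

end Swap

end FreeProd

theorem IsState.comp {A B : Type} [Ring A] [Algebra ℂ A] [StarRing A]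
    [Ring B] [Algebra ℂ B] [StarRing B] {φ : A →ₗ[ℂ] ℂ} (hφ : IsState φ) (f : B →⋆ₐ[ℂ] A) :
    IsState (φ ∘ₗ f.toAlgHom.toLinearMap) :=
  ⟨by simpa using hφ.1, fun b => by simpa [map_star] using hφ.2 (f b)⟩

theorem IsTracialState.comp {A B : Type} [Ring A] [Algebra ℂ A] [StarRing A]
    [Ring B] [Algebra ℂ B] [StarRing B] {φ : A →ₗ[ℂ] ℂ} (hφ : IsTracialState φ)
    (f : B →⋆ₐ[ℂ] A) : IsTracialState (φ ∘ₗ f.toAlgHom.toLinearMap) :=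
  ⟨hφ.1.comp f, fun a b => by simpa using hφ.2 (f a) (f b)⟩

namespace BrownAlg

variable {n : ℕ} (U : BrownAlg n)

theorem hom_ext {C : Type} [Ring C] [Algebra ℂ C] [StarRing C] [StarModule ℂ C]
    {f g : U.carrier →⋆ₐ[ℂ] C} (h : ∀ i j, f (U.u i j) = g (U.u i j)) : f = g := by
  have hrel_left : ∀ i j, (∑ k, star (g (U.u k i)) * g (U.u k j)) = if i = j then 1 else 0 :=
    fun i j => by simpa [map_sum, map_star, apply_ite g] using congrArg g (U.rel_left i j)
  have hrel_right : ∀ i j, (∑ k, g (U.u i k) * star (g (U.u j k))) = if i = j then 1 else 0 :=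
    fun i j => by simpa [map_sum, map_star, apply_ite g] using congrArg g (U.rel_right i j)
  exact (U.universal C (fun i j => g (U.u i j)) hrel_left hrel_right).unique h fun _ _ => rfl

variable {U} {Sa : U.carrier →⋆ₐ[ℂ] U.carrier}

theorem IsAntipode.apply_apply (hS : U.IsAntipode Sa) (a : U.carrier) : Sa (Sa a) = a := by
  have h : Sa.comp Sa = StarAlgHom.id ℂ U.carrier :=
    U.hom_ext fun i j => by
      rw [StarAlgHom.comp_apply, hS, map_star, hS, star_star]
      rfl
  exact DFunLike.congr_fun h a

variable {F : FreeProd U.carrier U.carrier} {Δ : U.carrier →⋆ₐ[ℂ] F.carrier}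

theorem swapMap_comp_coprod (hΔ : U.IsCoprod F Δ) (hS : U.IsAntipode Sa) :
    (F.swapMap Sa).comp Δ = Δ.comp Sa :=
  U.hom_ext fun i j => by
    rw [StarAlgHom.comp_apply, StarAlgHom.comp_apply, hΔ, hS, map_star, hΔ, map_sum, star_sum]
    refine Finset.sum_congr rfl fun k _ => ?_
    rw [map_mul, FreeProd.swapMap_inl, FreeProd.swapMap_inr, hS, hS, star_mul, map_star,
      map_star]

theorem FreeConv.comp_antipode (hΔ : U.IsCoprod F Δ) (hS : U.IsAntipode Sa)
    {φ ψ χ : U.carrier →ₗ[ℂ] ℂ} (h : U.FreeConv F Δ φ ψ χ) :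
    U.FreeConv F Δ (ψ ∘ₗ Sa.toAlgHom.toLinearMap) (φ ∘ₗ Sa.toAlgHom.toLinearMap)
      (χ ∘ₗ Sa.toAlgHom.toLinearMap) := by
  obtain ⟨Ψ, hΨ, hΨΔ⟩ := h
  refine ⟨Ψ ∘ₗ (F.swapMap Sa).toAlgHom.toLinearMap,
    hΨ.comp_swap _ _ (FreeProd.swapMap_inl Sa) (FreeProd.swapMap_inr Sa), fun a => ?_⟩
  have hSΔ := DFunLike.congr_fun (swapMap_comp_coprod hΔ hS) a
  simp only [StarAlgHom.comp_apply] at hSΔ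
  simp [hSΔ, hΨΔ]

theorem FreeConv.unique {φ ψ χ₁ χ₂ : U.carrier →ₗ[ℂ] ℂ} (hφ : φ 1 = 1) (hψ : ψ 1 = 1)
    (h₁ : U.FreeConv F Δ φ ψ χ₁) (h₂ : U.FreeConv F Δ φ ψ χ₂) : χ₁ = χ₂ := by
  obtain ⟨Ψ₁, H₁, hΨ₁⟩ := h₁
  obtain ⟨Ψ₂, H₂, hΨ₂⟩ := h₂
  obtain rfl := H₁.unique hφ hψ H₂
  exact LinearMap.ext fun a => (hΨ₁ a).symm.trans (hΨ₂ a)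

theorem antipode_invariant_and_left_haar_of_right_haar (hΔ : U.IsCoprod F Δ)
    (hS : U.IsAntipode Sa) (P : (U.carrier →ₗ[ℂ] ℂ) → Prop) (hP₁ : ∀ φ, P φ → φ 1 = 1)
    (hPS : ∀ φ, P φ → P (φ ∘ₗ Sa.toAlgHom.toLinearMap)) {h : U.carrier →ₗ[ℂ] ℂ} (hP : P h)
    (hright : ∀ φ, P φ → U.FreeConv F Δ h φ h) :
    (∀ a, h (Sa a) = h a) ∧ ∀ φ, P φ → U.FreeConv F Δ φ h h := by
  have hSS : ∀ φ : U.carrier →ₗ[ℂ] ℂ,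
      (φ ∘ₗ Sa.toAlgHom.toLinearMap) ∘ₗ Sa.toAlgHom.toLinearMap = φ :=
    fun φ => LinearMap.ext fun a => by simp [hS.apply_apply]
  have hleft : ∀ φ, P φ → U.FreeConv F Δ φ (h ∘ₗ Sa.toAlgHom.toLinearMap)
      (h ∘ₗ Sa.toAlgHom.toLinearMap) := fun φ hφ => by
    simpa only [hSS] using (hright _ (hPS φ hφ)).comp_antipode hΔ hS
  have hSh : h ∘ₗ Sa.toAlgHom.toLinearMap = h :=
    FreeConv.unique (hP₁ h hP) (hP₁ _ (hPS h hP)) (hleft h hP) (hright _ (hPS h hP))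
  exact ⟨fun a => LinearMap.congr_fun hSh a, hSh ▸ hleft⟩

end BrownAlg

theorem right_haar_is_left_haar_general (n : ℕ) (U : BrownAlg n)
    (F : FreeProd U.carrier U.carrier) (Δ : U.carrier →⋆ₐ[ℂ] F.carrier)
    (hΔ : U.IsCoprod F Δ) (Sa : U.carrier →⋆ₐ[ℂ] U.carrier) (hS : U.IsAntipode Sa) :
    (∀ h : U.carrier →ₗ[ℂ] ℂ, IsState h →
      (∀ φ : U.carrier →ₗ[ℂ] ℂ, IsState φ → U.FreeConv F Δ h φ h) →
      (∀ a, h (Sa a) = h a) ∧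
      (∀ φ : U.carrier →ₗ[ℂ] ℂ, IsState φ → U.FreeConv F Δ φ h h)) ∧
    (∀ h : U.carrier →ₗ[ℂ] ℂ, IsTracialState h →
      (∀ φ : U.carrier →ₗ[ℂ] ℂ, IsTracialState φ → U.FreeConv F Δ h φ h) →
      (∀ a, h (Sa a) = h a) ∧
      (∀ φ : U.carrier →ₗ[ℂ] ℂ, IsTracialState φ → U.FreeConv F Δ φ h h)) :=
  ⟨fun _ hh hright => BrownAlg.antipode_invariant_and_left_haar_of_right_haar hΔ hS IsState
      (fun _ hφ => hφ.1) (fun _ hφ => hφ.comp Sa) hh hright,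
    fun _ hh hright => BrownAlg.antipode_invariant_and_left_haar_of_right_haar hΔ hS
      IsTracialState (fun _ hφ => hφ.1.1) (fun _ hφ => hφ.comp Sa) hh hright⟩

/-- A right Haar state for the free convolution on `U⟨n⟩` satisfies
`h ∘ Σ = h` and is also a left Haar state; the same holds with 'state' replaced by
'tracial state'. -/
theorem right_haar_is_left_haar (n : ℕ) (hn : 1 ≤ n) (U : BrownAlg n)
    (F : FreeProd U.carrier U.carrier) (Δ : U.carrier →⋆ₐ[ℂ] F.carrier)
    (hΔ : U.IsCoprod F Δ) (Sa : U.carrier →⋆ₐ[ℂ] U.carrier) (hS : U.IsAntipode Sa) :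
    (∀ h : U.carrier →ₗ[ℂ] ℂ, IsState h →
      (∀ φ : U.carrier →ₗ[ℂ] ℂ, IsState φ → U.FreeConv F Δ h φ h) →
      (∀ a, h (Sa a) = h a) ∧
      (∀ φ : U.carrier →ₗ[ℂ] ℂ, IsState φ → U.FreeConv F Δ φ h h)) ∧
    (∀ h : U.carrier →ₗ[ℂ] ℂ, IsTracialState h →
      (∀ φ : U.carrier →ₗ[ℂ] ℂ, IsTracialState φ → U.FreeConv F Δ h φ h) →
      (∀ a, h (Sa a) = h a) ∧
      (∀ φ : U.carrier →ₗ[ℂ] ℂ, IsTracialState φ → U.FreeConv F Δ φ h h)) :=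
  right_haar_is_left_haar_general n U F Δ hΔ Sa hS
end
end
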